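/- Let N = 3. For parameters (Δ, σᵤ, Σ₀) with Δ > 0, σᵤ > 0, Σ₀ > 0, let β̂^{Δ,σᵤ,Σ₀} be Kyle's three-period equilibrium and T̃_{Δ,σᵤ,Σ₀}(β) := T_{Δ,σᵤ,Σ₀}(β, β̂₂^{Δ,σᵤ,Σ₀}, β̂₃^{Δ,σᵤ,Σ₀})₁ the first coordinate of the policy-iteration map with these parameters. Then the derivative of T̃ at the equilibrium first coordinate does not depend on the parameters: T̃′_{Δ,σᵤ,Σ₀}(β̂₁^{Δ,σᵤ,Σ₀}) = T̃′_{1,1,1}(β̂₁^{1,1,1}) for all Δ, σᵤ, Σ₀ > 0. -/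

import Mathlib

/-- The posterior-variance sequence `Σₙ^β` of the `N`-period policy-iteration map:
`Σ₀^β = Sig0` and `Σₙ^β = Σ_{n-1}^β σu²/(βₙ² Σ_{n-1}^β Δ + σu²)`. -/
noncomputable def kSig (Δ σu Sig0 : ℝ) (β : ℕ → ℝ) : ℕ → ℝ
  | 0 => Sig0
  | n + 1 =>
      kSig Δ σu Sig0 β n * σu ^ 2 /
        ((β (n + 1)) ^ 2 * kSig Δ σu Sig0 β n * Δ + σu ^ 2)

/-- Kyle's lambda `λₙ^β = βₙ Σ_{n-1}^β/(βₙ² Σ_{n-1}^β Δ + σu²)`. -/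
noncomputable def kLam (Δ σu Sig0 : ℝ) (β : ℕ → ℝ) (n : ℕ) : ℝ :=
  β n * kSig Δ σu Sig0 β (n - 1) /
    ((β n) ^ 2 * kSig Δ σu Sig0 β (n - 1) * Δ + σu ^ 2)

/-- Backward recursion for `αₙ^β`, indexed by the number of remaining steps `k = N - n`:
`α_N^β = 0` and `α_{n-1}^β = 1/(4 λₙ^β (1 - αₙ^β λₙ^β))`. -/
noncomputable def kAlphaAux (Δ σu Sig0 : ℝ) (N : ℕ) (β : ℕ → ℝ) : ℕ → ℝ
  | 0 => 0
  | k + 1 =>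
      1 / (4 * kLam Δ σu Sig0 β (N - k) *
        (1 - kAlphaAux Δ σu Sig0 N β k * kLam Δ σu Sig0 β (N - k)))

/-- `αₙ^β` for the `N`-period policy-iteration map. -/
noncomputable def kAlpha (Δ σu Sig0 : ℝ) (N : ℕ) (β : ℕ → ℝ) (n : ℕ) : ℝ :=
  kAlphaAux Δ σu Sig0 N β (N - n)

/-- The `n`-th coordinate of the `N`-period policy-iteration map:
`T(β)ₙ = (1 - 2 αₙ^β λₙ^β)/(2 Δ λₙ^β (1 - αₙ^β λₙ^β))`. -/
noncomputable def kT (Δ σu Sig0 : ℝ) (N : ℕ) (β : ℕ → ℝ) (n : ℕ) : ℝ :=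
  (1 - 2 * kAlpha Δ σu Sig0 N β n * kLam Δ σu Sig0 β n) /
    (2 * Δ * kLam Δ σu Sig0 β n *
      (1 - kAlpha Δ σu Sig0 N β n * kLam Δ σu Sig0 β n))

/-- The domain of the `N`-period policy-iteration map: all denominators
appearing in `Σ`, `λ`, `α` and `T` are nonzero. -/
def kDom (Δ σu Sig0 : ℝ) (N : ℕ) (β : ℕ → ℝ) : Prop :=
  ∀ n, 1 ≤ n → n ≤ N →
    (β n) ^ 2 * kSig Δ σu Sig0 β (n - 1) * Δ + σu ^ 2 ≠ 0 ∧
    kLam Δ σu Sig0 β n ≠ 0 ∧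
    1 - kAlpha Δ σu Sig0 N β n * kLam Δ σu Sig0 β n ≠ 0

/-- Kyle's `N`-period equilibrium data: `b` is the autonomous sequence
(`b N = 1`, `b n ∈ (0,1)` for `n < N`, backward recursion), `S` the equilibrium
variance sequence and `βh` the equilibrium trading intensities. -/
structure KyleEq (Δ σu Sig0 : ℝ) (N : ℕ) (b S βh : ℕ → ℝ) : Prop where
  hbN : b N = 1
  hbIoo : ∀ n, 1 ≤ n → n < N → b n ∈ Set.Ioo (0 : ℝ) 1
  hbrec : ∀ n, 2 ≤ n → n ≤ N →
    (b n) ^ 2 = (b (n - 1)) ^ 2 / ((1 - (b (n - 1)) ^ 2) ^ 2 * (1 + (b (n - 1)) ^ 2))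
  hS0 : S 0 = Sig0
  hSrec : ∀ n, 1 ≤ n → n ≤ N → S n = S (n - 1) / (1 + (b n) ^ 2)
  hβ : ∀ n, 1 ≤ n → n ≤ N → βh n = b n * σu / Real.sqrt (S (n - 1) * Δ)

/-!
The policy-iteration map is equivariant under rescaling. With `k = √(Σ₀Δ)/σᵤ`, passing from
the parameters `(Δ, σᵤ, Σ₀)` and the strategy `β` to `(1, 1, 1)` and `k β` divides every `Σₙ` by
`Σ₀`, multiplies every `λₙ` by `m = kσᵤ²/Σ₀`, divides every `αₙ` by `m` and, as `Δ = k m`,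
multiplies `T` by `k`.
Since the sequence `b̂` does not depend on the parameters, Kyle's equilibrium rescales in the
same way, `β̂^{1,1,1} = k β̂`. Hence the normalized map is `y ↦ k T̃(y / k)`, whose derivative at
`k β̂₁` is `T̃'(β̂₁)`.
-/

open Set

section Normalize

variable {Δ σu Sig0 k : ℝ} (β : ℕ → ℝ)

theorem normalized_denom (hσ : σu ≠ 0) (hSig0 : Sig0 ≠ 0) (hk : k ^ 2 * σu ^ 2 = Sig0 * Δ)
    (x s : ℝ) : (k * x) ^ 2 * (s / Sig0) * 1 + 1 ^ 2 = (x ^ 2 * s * Δ + σu ^ 2) / σu ^ 2 := by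
  field_simp
  linear_combination x ^ 2 * s * hk

theorem kSig_normalize (hσ : σu ≠ 0) (hSig0 : Sig0 ≠ 0) (hk : k ^ 2 * σu ^ 2 = Sig0 * Δ)
    (n : ℕ) : kSig 1 1 1 (fun j => k * β j) n = kSig Δ σu Sig0 β n / Sig0 := by
  induction n with
  | zero => exact (div_self hSig0).symm
  | succ n ih =>
    rw [kSig, kSig, ih, normalized_denom hσ hSig0 hk, div_div_eq_mul_div]
    ring

theorem kLam_normalize (hσ : σu ≠ 0) (hSig0 : Sig0 ≠ 0) (hk : k ^ 2 * σu ^ 2 = Sig0 * Δ)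
    (n : ℕ) : kLam 1 1 1 (fun j => k * β j) n = k * σu ^ 2 / Sig0 * kLam Δ σu Sig0 β n := by
  rw [kLam, kLam, kSig_normalize β hσ hSig0 hk, normalized_denom hσ hSig0 hk, div_div_eq_mul_div]
  ring

theorem kAlphaAux_normalize (hσ : σu ≠ 0) (hSig0 : Sig0 ≠ 0) (hk0 : k ≠ 0)
    (hk : k ^ 2 * σu ^ 2 = Sig0 * Δ) (N j : ℕ) :
    kAlphaAux 1 1 1 N (fun i => k * β i) j = kAlphaAux Δ σu Sig0 N β j / (k * σu ^ 2 / Sig0) := by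
  induction j with
  | zero => simp [kAlphaAux]
  | succ j ih =>
    rw [kAlphaAux, kAlphaAux, ih, kLam_normalize β hσ hSig0 hk]
    field_simp

theorem kT_normalize (hσ : σu ≠ 0) (hSig0 : Sig0 ≠ 0) (hk0 : k ≠ 0)
    (hk : k ^ 2 * σu ^ 2 = Sig0 * Δ) (N n : ℕ) :
    kT 1 1 1 N (fun i => k * β i) n = k * kT Δ σu Sig0 N β n := by
  have hΔ : Δ = k * (k * σu ^ 2 / Sig0) := by
    field_simp
    linear_combination -hk
  rw [kT, kT, kAlpha, kAlpha, kAlphaAux_normalize β hσ hSig0 hk0 hk,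
    kLam_normalize β hσ hSig0 hk, hΔ]
  field_simp

end Normalize

section Congr

variable {Δ σu Sig0 : ℝ} {β β' : ℕ → ℝ}

theorem kSig_congr {n : ℕ} (h : EqOn β β' (Icc 1 n)) :
    kSig Δ σu Sig0 β n = kSig Δ σu Sig0 β' n := by
  induction n with
  | zero => rfl
  | succ n ih =>
    rw [kSig, kSig, ih (h.mono (Icc_subset_Icc_right n.le_succ)),
      h ⟨Nat.le_add_left 1 n, le_rfl⟩]

theorem kLam_congr {n : ℕ} (h : EqOn β β' (Icc 1 n)) (hn : 1 ≤ n) :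
    kLam Δ σu Sig0 β n = kLam Δ σu Sig0 β' n := by
  rw [kLam, kLam, kSig_congr (h.mono (Icc_subset_Icc_right (n.sub_le 1))), h ⟨hn, le_rfl⟩]

theorem kAlphaAux_congr {N j : ℕ} (h : EqOn β β' (Icc 1 N)) (hj : j ≤ N) :
    kAlphaAux Δ σu Sig0 N β j = kAlphaAux Δ σu Sig0 N β' j := by
  induction j with
  | zero => rfl
  | succ j ih =>
    rw [kAlphaAux, kAlphaAux, ih (by omega),
      kLam_congr (h.mono (Icc_subset_Icc_right (N.sub_le j))) (by omega)]

theorem kT_congr {N n : ℕ} (h : EqOn β β' (Icc 1 N)) (hn : 1 ≤ n) (hnN : n ≤ N) :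
    kT Δ σu Sig0 N β n = kT Δ σu Sig0 N β' n := by
  rw [kT, kT, kAlpha, kAlpha, kAlphaAux_congr h (N.sub_le n),
    kLam_congr (h.mono (Icc_subset_Icc_right hnN)) hn]

end Congr

namespace KyleEq

variable {Δ σu Sig0 : ℝ} {N : ℕ} {b S βh S1 βh1 : ℕ → ℝ}

theorem S_normalize (hSig0 : Sig0 ≠ 0) (heq : KyleEq Δ σu Sig0 N b S βh)
    (heq1 : KyleEq 1 1 1 N b S1 βh1) {n : ℕ} (hn : n ≤ N) : S1 n = S n / Sig0 := by
  induction n with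
  | zero => rw [heq1.hS0, heq.hS0, div_self hSig0]
  | succ n ih =>
    rw [heq1.hSrec (n + 1) (by omega) hn, heq.hSrec (n + 1) (by omega) hn, Nat.add_sub_cancel,
      ih (by omega), div_right_comm]

theorem βh_normalize (hΔ : 0 < Δ) (hσ : σu ≠ 0) (hSig0 : 0 < Sig0)
    (heq : KyleEq Δ σu Sig0 N b S βh) (heq1 : KyleEq 1 1 1 N b S1 βh1) :
    EqOn βh1 (fun n => √(Sig0 * Δ) / σu * βh n) (Icc 1 N) := by
  rintro n ⟨hn1, hnN⟩
  dsimp only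
  have hΔ' : √Δ ≠ 0 := (Real.sqrt_pos.mpr hΔ).ne'
  rw [heq1.hβ n hn1 hnN, heq.hβ n hn1 hnN, heq.S_normalize hSig0.ne' heq1 (by omega),
    mul_one, mul_one, Real.sqrt_div' _ hSig0.le, Real.sqrt_mul' _ hΔ.le,
    Real.sqrt_mul' _ hΔ.le]
  field_simp

end KyleEq

theorem deriv_kT_coord_eq_normalized {Δ σu Sig0 : ℝ} (hΔ : 0 < Δ) (hσ : σu ≠ 0)
    (hSig0 : 0 < Sig0) {N n : ℕ} {b S βh S1 βh1 : ℕ → ℝ} (heq : KyleEq Δ σu Sig0 N b S βh)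
    (heq1 : KyleEq 1 1 1 N b S1 βh1) (hn : 1 ≤ n) (hnN : n ≤ N) :
    deriv (fun x => kT Δ σu Sig0 N (fun j => if j = n then x else βh j) n) (βh n) =
      deriv (fun x => kT 1 1 1 N (fun j => if j = n then x else βh1 j) n) (βh1 n) := by
  set k := √(Sig0 * Δ) / σu
  have hk0 : k ≠ 0 := div_ne_zero (Real.sqrt_pos.mpr (by positivity)).ne' hσ
  have hk : k ^ 2 * σu ^ 2 = Sig0 * Δ := by
    rw [div_pow, div_mul_cancel₀ _ (pow_ne_zero 2 hσ), Real.sq_sqrt (by positivity)]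
  have hβ := heq.βh_normalize hΔ hσ hSig0 heq1
  set T := fun x => kT Δ σu Sig0 N (fun j => if j = n then x else βh j) n
  have hfun : (fun y => kT 1 1 1 N (fun j => if j = n then y else βh1 j) n) =
      fun y => k * T (k⁻¹ * y) := by
    funext y
    rw [← kT_normalize _ hσ hSig0.ne' hk0 hk]
    refine kT_congr (fun j hj => ?_) hn hnN
    split_ifs
    · field_simp
    · exact hβ hj
  rw [hfun, deriv_const_mul_field, deriv_comp_mul_left, hβ ⟨hn, hnN⟩, smul_eq_mul,
    inv_mul_cancel_left₀ hk0, mul_inv_cancel_left₀ hk0]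

/-- For `N = 3`: the derivative of `T̃(β) := T(β, β̂₂, β̂₃)₁` at the equilibrium first
coordinate does not depend on the parameters `(Δ, σu, Sig0)`: it equals its value
for the normalized parameters `Δ = σu = Sig0 = 1`. -/
theorem three_period_derivative_parameter_free (Δ σu Sig0 : ℝ) (hΔ : 0 < Δ)
    (hσ : 0 < σu) (hSig : 0 < Sig0)
    (b S βh : ℕ → ℝ) (heq : KyleEq Δ σu Sig0 3 b S βh)
    (S1 βh1 : ℕ → ℝ) (heq1 : KyleEq 1 1 1 3 b S1 βh1) :
    deriv (fun x => kT Δ σu Sig0 3 (fun n => if n = 1 then x else βh n) 1) (βh 1) =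
      deriv (fun x => kT 1 1 1 3 (fun n => if n = 1 then x else βh1 n) 1) (βh1 1) :=
  deriv_kT_coord_eq_normalized hΔ hσ.ne' hSig heq heq1 le_rfl (by norm_num)
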